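/- arXiv:2408.04079 — 2 statements merged into one kernel-verified Lean document; each statement's English description precedes it below -/
import Mathlib

section
/- Let R be a local ring with 1/2 and let I ∈ GL_n(R) satisfy I² = E. Then I is conjugate in GL_n(R) to a diagonal matrix diag(1,...,1,-1,...,-1) with t ones and s = n - t negative ones for some t. -/
/-!
For an involution `M` and a coordinate vector `e`, the vectors `e + M e` and `e - M e` are
eigenvectors of `M` for `1` and `-1` whose `e`-coordinates add up to the unit `2`; over a local
ring one of these coordinates is a unit. Rescaled, that eigenvector is the last column of a
unipotent change of basis after which `M = [B 0; C ε]` with `ε = ±1`, and `M² = 1` forces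
`B² = 1` and `C B = -ε C`, so conjugating by `[1 0; ½ ε C 1]` removes `C`. Induction on the size
diagonalises `M` with entries `±1`, and a permutation of the basis sorts them.
-/

open Matrix

section

variable {R : Type*} [Ring R] {m n : Type*} [Fintype m] [Fintype n] [DecidableEq m] [DecidableEq n]

namespace Matrix

@[simps]
def unitFromBlocksZero₂₁ (B : Matrix m n R) : (Matrix (m ⊕ n) (m ⊕ n) R)ˣ where
  val := fromBlocks 1 B 0 1
  inv := fromBlocks 1 (-B) 0 1
  val_inv := by simp [fromBlocks_multiply]
  inv_val := by simp [fromBlocks_multiply]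

@[simps]
def unitFromBlocksZero₁₂ (C : Matrix n m R) : (Matrix (m ⊕ n) (m ⊕ n) R)ˣ where
  val := fromBlocks 1 0 C 1
  inv := fromBlocks 1 0 (-C) 1
  val_inv := by simp [fromBlocks_multiply]
  inv_val := by simp [fromBlocks_multiply]

theorem fromBlocks_zero₁₂_mul_self_eq_one_iff {B : Matrix m m R} {C : Matrix n m R}
    {D : Matrix n n R} :
    fromBlocks B 0 C D * fromBlocks B 0 C D = 1 ↔ B * B = 1 ∧ C * B + D * C = 0 ∧ D * D = 1 := by
  simp [fromBlocks_multiply, ← fromBlocks_one, fromBlocks_inj]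

theorem isConj_fromBlocks_zero₁₂ [Invertible (2 : R)] {B : Matrix m m R} {C : Matrix n m R}
    {D : Matrix n n R} (h : fromBlocks B 0 C D * fromBlocks B 0 C D = 1) :
    IsConj (fromBlocks B 0 C D) (fromBlocks B 0 0 D) := by
  obtain ⟨-, hC, hD⟩ := fromBlocks_zero₁₂_mul_self_eq_one_iff.1 h
  have hhalf : ∀ r : R, Commute (⅟2) r := fun r => (Commute.ofNat_left 2 r).invOf_left
  set s : Matrix n n R := scalar n (⅟2 : R)
  have hs : Commute s D := scalar_commute _ hhalf D
  refine ⟨unitFromBlocksZero₁₂ (s * D * C), ?_⟩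
  -- the conjugation replaces `C` by `X B + C - D X`, with `X = ½ D C`
  have key : s * D * C * B + C = D * (s * D * C) := by
    have hCB : C * B = -(D * C) := eq_neg_of_add_eq_zero_left hC
    have hss : s + s = 1 := by rw [← map_add, invOf_two_add_invOf_two, map_one]
    calc s * D * C * B + C = -(s * (D * D) * C) + (s + s) * C := by
          rw [hss, Matrix.one_mul, Matrix.mul_assoc (s * D), hCB, Matrix.mul_neg,
            Matrix.mul_assoc s, Matrix.mul_assoc s, Matrix.mul_assoc D]
      _ = s * (D * D) * C := by rw [hD, mul_one, Matrix.add_mul]; abel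
      _ = D * (s * D * C) := by
          rw [← Matrix.mul_assoc D, ← mul_assoc D, ← hs.eq, mul_assoc s D D]
  simp [SemiconjBy, fromBlocks_multiply, key]

theorem isConj_reindex_self (A : Matrix m m R) (σ : Equiv.Perm m) : IsConj A (reindex σ σ A) := by
  refine ⟨⟨σ.symm.toPEquiv.toMatrix, σ.toPEquiv.toMatrix, ?_, ?_⟩, ?_⟩
  · rw [← PEquiv.toMatrix_trans, ← Equiv.toPEquiv_trans, Equiv.symm_trans_self,
      Equiv.toPEquiv_refl, PEquiv.toMatrix_refl]
  · rw [← PEquiv.toMatrix_trans, ← Equiv.toPEquiv_trans, Equiv.self_trans_symm,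
      Equiv.toPEquiv_refl, PEquiv.toMatrix_refl]
  · simp [SemiconjBy, PEquiv.toMatrix_toPEquiv_mul, PEquiv.mul_toMatrix_toPEquiv]

end Matrix

theorem IsConj.fromBlocks_zero_zero {B B' : Matrix m m R} (h : IsConj B B') (D : Matrix n n R) :
    IsConj (fromBlocks B 0 0 D) (fromBlocks B' 0 0 D) := by
  obtain ⟨c, hc⟩ := h
  refine ⟨⟨fromBlocks c 0 0 1, fromBlocks ↑c⁻¹ 0 0 1, by simp [fromBlocks_multiply],
    by simp [fromBlocks_multiply]⟩, ?_⟩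
  simp [SemiconjBy, fromBlocks_multiply, hc.eq]

theorem IsConj.reindex {A B : Matrix m m R} (h : IsConj A B) (e : m ≃ n) :
    IsConj (reindex e e A) (reindex e e B) :=
  (reindexRingEquiv R e).toMonoidHom.map_isConj h

theorem Fin.exists_perm_forall_iff_lt_card {k : ℕ} (p : Fin k → Prop) [DecidablePred p] :
    ∃ σ : Equiv.Perm (Fin k), ∀ i, p (σ i) ↔ (i : ℕ) < Fintype.card {i // p i} := by
  set t := Fintype.card {i // p i}
  have hcard : Fintype.card {i : Fin k // (i : ℕ) < t} = t :=
    Fintype.card_fin_lt_of_le (by simpa using Fintype.card_subtype_le p)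
  let e₁ : {i : Fin k // (i : ℕ) < t} ≃ {i // p i} := Fintype.equivOfCardEq hcard
  let e₂ : {i : Fin k // ¬(i : ℕ) < t} ≃ {i // ¬p i} :=
    Fintype.equivOfCardEq (by simp only [Fintype.card_subtype_compl, hcard, t])
  refine ⟨Equiv.subtypeCongr e₁ e₂, fun i => ?_⟩
  by_cases hi : (i : ℕ) < t
  · simpa [Equiv.subtypeCongr, hi] using (e₁ ⟨i, hi⟩).2
  · simpa [Equiv.subtypeCongr, hi] using (e₂ ⟨i, hi⟩).2

section LocalRing

variable [IsLocalRing R] [Invertible (2 : R)] {ι : Type*} [Fintype ι] [DecidableEq ι]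

theorem exists_mulVec_eq_zsmul_of_mul_self_eq_one {M : Matrix ι ι R} (hM : M * M = 1) (i : ι) :
    ∃ (u : ι → R) (ε : ℤˣ), u i = 1 ∧ M *ᵥ u = (ε : ℤ) • u := by
  set e : ι → R := Pi.single i 1
  have hMMe : M *ᵥ (M *ᵥ e) = e := by rw [mulVec_mulVec, hM, one_mulVec]
  have h2 : (e + M *ᵥ e) i + (e - M *ᵥ e) i = 2 := by
    simp [e, add_add_sub_cancel, one_add_one_eq_two]
  obtain ⟨u, ε, hu, hMu⟩ : ∃ (u : ι → R) (ε : ℤˣ), IsUnit (u i) ∧ M *ᵥ u = (ε : ℤ) • u := by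
    rcases IsLocalRing.isUnit_or_isUnit_of_isUnit_add (h2 ▸ isUnit_of_invertible (2 : R)) with h | h
    · exact ⟨_, 1, h, by simp [mulVec_add, hMMe, add_comm]⟩
    · exact ⟨_, -1, h, by simp [mulVec_sub, hMMe]⟩
  refine ⟨MulOpposite.op (↑hu.unit⁻¹ : R) • u, ε, by simp, ?_⟩
  rw [mulVec_smul, hMu, smul_comm]

theorem exists_isConj_fromBlocks_of_mul_self_eq_one {M : Matrix (ι ⊕ Unit) (ι ⊕ Unit) R}
    (hM : M * M = 1) :
    ∃ (B : Matrix ι ι R) (ε : ℤˣ), B * B = 1 ∧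
      IsConj M (fromBlocks B 0 0 (diagonal fun _ => ((ε : ℤ) : R))) := by
  obtain ⟨u, ε, hu, hMu⟩ := exists_mulVec_eq_zsmul_of_mul_self_eq_one hM (Sum.inr ())
  set e : ι ⊕ Unit → R := Pi.single (Sum.inr ()) 1
  let g := unitFromBlocksZero₂₁ (of fun i _ => u (Sum.inl i) : Matrix ι Unit R)
  have hge : (g : Matrix (ι ⊕ Unit) (ι ⊕ Unit) R) *ᵥ e = u := by
    ext (i | ⟨⟩) <;> simp [e, g, hu]
  set J : Matrix (ι ⊕ Unit) (ι ⊕ Unit) R := (↑g⁻¹ : Matrix (ι ⊕ Unit) (ι ⊕ Unit) R) * M * g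
  have hMJ : IsConj M J := ⟨g⁻¹, by simp [SemiconjBy, J, mul_assoc]⟩
  have hJJ : J * J = 1 := by
    simp only [J, mul_assoc, Units.mul_inv_cancel_left]
    rw [← mul_assoc M, hM, one_mul, Units.inv_mul]
  have hJe : ∀ k, J k (Sum.inr ()) = (ε : ℤ) • e k := by
    have : J *ᵥ e = (ε : ℤ) • e := by
      rw [← mulVec_mulVec, ← mulVec_mulVec, hge, hMu, mulVec_smul, ← hge, mulVec_mulVec,
        Units.inv_mul, one_mulVec]
    simpa [e, mulVec_single_one] using congrFun this
  have hJ : J = fromBlocks (toBlocks₁₁ J) 0 (toBlocks₂₁ J) (diagonal fun _ => ((ε : ℤ) : R)) := by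
    conv_lhs => rw [← fromBlocks_toBlocks J]
    congr 1
    · ext i ⟨⟩
      simpa [e, toBlocks₁₂] using hJe (Sum.inl i)
    · ext ⟨⟩ ⟨⟩
      simpa [e, toBlocks₂₂] using hJe (Sum.inr ())
  rw [hJ] at hMJ hJJ
  exact ⟨_, ε, (fromBlocks_zero₁₂_mul_self_eq_one_iff.1 hJJ).1,
    hMJ.trans (isConj_fromBlocks_zero₁₂ hJJ)⟩

theorem exists_isConj_diagonal_of_mul_self_eq_one :
    ∀ {n : ℕ} {M : Matrix (Fin n) (Fin n) R}, M * M = 1 →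
      ∃ d : Fin n → ℤˣ, IsConj M (diagonal fun i => ((d i : ℤ) : R))
  | 0, M, _ => ⟨finZeroElim, by rw [Subsingleton.elim M (diagonal _)]⟩
  | n + 1, M, hM => by
    let e : Fin (n + 1) ≃ Fin n ⊕ Unit := (finSuccEquiv n).trans (Equiv.optionEquivSumPUnit _)
    obtain ⟨B, ε, hB, hMB⟩ := exists_isConj_fromBlocks_of_mul_self_eq_one (M := reindex e e M)
      (by rw [← coe_reindexRingEquiv, ← map_mul, hM, map_one])
    obtain ⟨d, hBd⟩ := exists_isConj_diagonal_of_mul_self_eq_one hB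
    refine ⟨Sum.elim d (fun _ => ε) ∘ e, ?_⟩
    have := (hMB.trans (hBd.fromBlocks_zero_zero _)).reindex e.symm
    simp only [fromBlocks_diagonal, reindex_apply, Equiv.symm_symm, submatrix_submatrix,
      Equiv.symm_comp_self, submatrix_id_id, submatrix_diagonal_equiv] at this
    convert this using 2
    ext i
    simp only [Function.comp_apply]
    rcases e i with j | _ <;> rfl

end LocalRing

end

theorem stmt_4_general (R : Type*) [Ring R] [IsLocalRing R] (h2 : IsUnit (2 : R))
    (n : ℕ) (I : (Matrix (Fin n) (Fin n) R)ˣ) (hI : I ^ 2 = 1) :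
    ∃ g : (Matrix (Fin n) (Fin n) R)ˣ, ∃ t : ℕ, t ≤ n ∧
      Units.val (g * I * g⁻¹) =
        Matrix.diagonal (fun i : Fin n => if (i : ℕ) < t then (1 : R) else -1) := by
  have := h2.invertible
  obtain ⟨d, hId⟩ := exists_isConj_diagonal_of_mul_self_eq_one (M := (I : Matrix (Fin n) (Fin n) R))
    (by rw [← Units.val_mul, ← sq, hI, Units.val_one])
  obtain ⟨σ, hσ⟩ := Fin.exists_perm_forall_iff_lt_card (fun i => d i = 1)
  obtain ⟨g, hg⟩ := hId.trans (isConj_reindex_self _ σ.symm)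
  refine ⟨g, _, (Fintype.card_subtype_le (fun i => d i = 1)).trans_eq (Fintype.card_fin n), ?_⟩
  rw [Units.val_mul, Units.val_mul, hg.eq, mul_assoc, Units.mul_inv, mul_one, reindex_apply,
    Equiv.symm_symm, submatrix_diagonal_equiv]
  congr 1
  ext i
  rcases Int.units_eq_one_or (d (σ i)) with h | h
  · simp [h, (hσ i).1 h]
  · have : ¬(i : ℕ) < Fintype.card {i // d i = 1} := fun hi => by simp [(hσ i).2 hi] at h
    simp [h, this]

theorem stmt_4 (R : Type*) [Ring R] [Nontrivial R] [IsLocalRing R] (h2 : IsUnit (2 : R))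
    (n : ℕ) (I : (Matrix (Fin n) (Fin n) R)ˣ) (hI : I ^ 2 = 1) :
    ∃ g : (Matrix (Fin n) (Fin n) R)ˣ, ∃ t : ℕ, t ≤ n ∧
      Units.val (g * I * g⁻¹) =
        Matrix.diagonal (fun i : Fin n => if (i : ℕ) < t then (1 : R) else -1) :=
  stmt_4_general R h2 n I hI
end

section
/- Let R be a local ring with 1/2 and let I₁, I₂ ∈ GL_n(R) be commuting involutions (I₁² = I₂² = E, I₁I₂ = I₂I₁). Then there is a single matrix g ∈ GL_n(R) such that both g I₁ g⁻¹ and g I₂ g⁻¹ are diagonal matrices with entries ±1. -/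
/-!
Induct on `n`. The four elements `e = ¼(1 ± S)(1 ± T)` are commuting idempotents summing to `1`,
so in a local ring one of them has a unit `(0, 0)` entry. Two elementary (rank-one) changes of
basis then make the first basis vector an eigenvector of `e` on both sides, hence also a
two-sided eigenvector of `S` and `T` with eigenvalues `±1`. After this change of basis `S` and
`T` are block diagonal with a `1 × 1` corner; their lower blocks are again commuting involutions,
to which the induction hypothesis applies.
-/

open Matrix

theorem units_smul_mul_units_smul {A : Type*} [Ring A] (ε : ℤˣ) (S : A) :
    (ε • S) * (ε • S) = S * S := by
  rw [smul_mul_smul_comm, Int.units_mul_self, one_smul]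

theorem Units.conj_mul_conj {A : Type*} [Monoid A] (g : Aˣ) (x y : A) :
    (g⁻¹ * x * g : A) * (g⁻¹ * y * g) = g⁻¹ * (x * y) * g := by
  simp only [mul_assoc, Units.mul_inv_cancel_left]

section IsTwoSidedEigen

variable {A : Type*} [Ring A]

/-- Signs are taken in `ℤˣ`, so that `ε • e` commutes with everything in any ring. -/
def IsTwoSidedEigen (X : A) (ε : ℤˣ) (e : A) : Prop := X * e = ε • e ∧ e * X = ε • e

variable {X e : A} {ε : ℤˣ}

theorem IsTwoSidedEigen.mul_right (h : IsTwoSidedEigen X ε e) {f : A} (hf : Commute X f) :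
    IsTwoSidedEigen X ε (e * f) :=
  ⟨by rw [← mul_assoc, h.1, smul_mul_assoc],
    by rw [mul_assoc, ← hf.eq, ← mul_assoc, h.2, smul_mul_assoc]⟩

theorem IsTwoSidedEigen.mul_left (h : IsTwoSidedEigen X ε e) {f : A} (hf : Commute X f) :
    IsTwoSidedEigen X ε (f * e) :=
  ⟨by rw [← mul_assoc, hf.eq, mul_assoc, h.1, mul_smul_comm],
    by rw [mul_assoc, h.2, mul_smul_comm]⟩

theorem IsTwoSidedEigen.units_conj (h : IsTwoSidedEigen X ε e) (g : Aˣ) :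
    IsTwoSidedEigen (g⁻¹ * X * g : A) ε (g⁻¹ * e * g) :=
  ⟨by rw [Units.conj_mul_conj, h.1, mul_smul_comm, smul_mul_assoc],
    by rw [Units.conj_mul_conj, h.2, mul_smul_comm, smul_mul_assoc]⟩

end IsTwoSidedEigen

section EigenProj

variable {A : Type*} [Ring A] [Invertible (2 : A)]

def eigenProj (S : A) : A := ⅟2 * (1 + S)

theorem commute_invOf_two (x : A) : Commute (⅟2 : A) x := (Commute.ofNat_left 2 x).invOf_left

theorem eigenProj_add_eigenProj_neg (S : A) : eigenProj S + eigenProj (-S) = 1 := by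
  rw [eigenProj, eigenProj, ← mul_add, add_add_add_comm, add_neg_cancel, add_zero,
    one_add_one_eq_two, invOf_mul_self]

theorem sum_eigenProj_units_smul (S : A) : ∑ ε : ℤˣ, eigenProj (ε • S) = 1 :=
  calc ∑ ε : ℤˣ, eigenProj (ε • S)
      = eigenProj ((1 : ℤˣ) • S) + eigenProj ((-1 : ℤˣ) • S) :=
        Finset.sum_pair (by decide)
    _ = 1 := by rw [one_smul, Units.neg_smul, one_smul, eigenProj_add_eigenProj_neg]

theorem sum_eigenProj_mul_eigenProj (S T : A) :
    ∑ p : ℤˣ × ℤˣ, eigenProj (p.1 • S) * eigenProj (p.2 • T) = 1 :=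
  calc ∑ p : ℤˣ × ℤˣ, eigenProj (p.1 • S) * eigenProj (p.2 • T)
      = (∑ ε : ℤˣ, eigenProj (ε • S)) * ∑ δ : ℤˣ, eigenProj (δ • T) := by
        rw [Fintype.sum_mul_sum, Fintype.sum_prod_type]
    _ = 1 := by rw [sum_eigenProj_units_smul, sum_eigenProj_units_smul, one_mul]

variable {S : A}

theorem mul_eigenProj (hS : S * S = 1) : S * eigenProj S = eigenProj S := by
  rw [eigenProj, ← mul_assoc, ← (commute_invOf_two S).eq, mul_assoc, mul_add, hS, mul_one,
    add_comm]

theorem eigenProj_mul (hS : S * S = 1) : eigenProj S * S = eigenProj S := by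
  rw [eigenProj, mul_assoc, add_mul, hS, one_mul, add_comm]

theorem isIdempotentElem_eigenProj (hS : S * S = 1) : IsIdempotentElem (eigenProj S) := by
  change ⅟2 * (1 + S) * eigenProj S = eigenProj S
  rw [mul_assoc, add_mul, one_mul, mul_eigenProj hS, ← two_mul, invOf_mul_cancel_left]

theorem Commute.eigenProj_right {T : A} (h : Commute S T) : Commute S (eigenProj T) :=
  (commute_invOf_two S).symm.mul_right ((Commute.one_right S).add_right h)

theorem isTwoSidedEigen_eigenProj (hS : S * S = 1) (ε : ℤˣ) :
    IsTwoSidedEigen S ε (eigenProj (ε • S)) := by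
  have hεS := (units_smul_mul_units_smul ε S).trans hS
  constructor
  · calc S * eigenProj (ε • S) = ε • ((ε • S) * eigenProj (ε • S)) := by
          rw [smul_mul_assoc, smul_smul, Int.units_mul_self, one_smul]
      _ = ε • eigenProj (ε • S) := by rw [mul_eigenProj hεS]
  · calc eigenProj (ε • S) * S = ε • (eigenProj (ε • S) * (ε • S)) := by
          rw [mul_smul_comm, smul_smul, Int.units_mul_self, one_smul]
      _ = ε • eigenProj (ε • S) := by rw [eigenProj_mul hεS]

theorem isIdempotentElem_eigenProj_mul_eigenProj {T : A} (hS : S * S = 1) (hT : T * T = 1)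
    (hST : Commute S T) (ε δ : ℤˣ) :
    IsIdempotentElem (eigenProj (ε • S) * eigenProj (δ • T)) :=
  IsIdempotentElem.mul_of_commute
    ((hST.smul_left ε).smul_right δ).eigenProj_right.symm.eigenProj_right.symm
    (isIdempotentElem_eigenProj ((units_smul_mul_units_smul ε S).trans hS))
    (isIdempotentElem_eigenProj ((units_smul_mul_units_smul δ T).trans hT))

theorem isTwoSidedEigen_eigenProj_mul_eigenProj {T : A} (hS : S * S = 1) (hT : T * T = 1)
    (hST : Commute S T) (ε δ : ℤˣ) :
    IsTwoSidedEigen S ε (eigenProj (ε • S) * eigenProj (δ • T)) ∧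
      IsTwoSidedEigen T δ (eigenProj (ε • S) * eigenProj (δ • T)) :=
  ⟨(isTwoSidedEigen_eigenProj hS ε).mul_right (hST.smul_right δ).eigenProj_right,
    (isTwoSidedEigen_eigenProj hT δ).mul_left (hST.symm.smul_right ε).eigenProj_right⟩

end EigenProj

namespace Matrix

section Transvection

variable {m R : Type*} [Fintype m] [DecidableEq m] [Ring R]

/-- Sherman–Morrison: the inverse is `1 - c (1 + r c)⁻¹ r`. -/
theorem isUnit_one_add_vecMulVec {c r : m → R} (h : IsUnit (1 + r ⬝ᵥ c)) :
    IsUnit (1 + vecMulVec c r) := by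
  obtain ⟨x, hx⟩ := h
  let f : R → Matrix m m R := fun s => vecMulVec c (s • r)
  have f_zero : f 0 = 0 := by simp only [f, zero_smul, vecMulVec_zero]
  have f_sub (s t : R) : f (s - t) = f s - f t := by simp only [f, sub_smul, vecMulVec_sub]
  have f_mul (s t : R) : f s * f t = f (s * (r ⬝ᵥ c) * t) := by
    simp only [f, vecMulVec_mul_vecMulVec, smul_dotProduct, smul_eq_mul, smul_smul]
  refine ⟨⟨1 + f 1, 1 - f ↑x⁻¹, ?_, ?_⟩, by simp only [f, one_smul]⟩
  · calc (1 + f 1) * (1 - f ↑x⁻¹) = 1 + (f 1 - f ↑x⁻¹ - f 1 * f ↑x⁻¹) := by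
          noncomm_ring
      _ = 1 + f (1 - (1 + r ⬝ᵥ c) * ↑x⁻¹) := by
        rw [f_mul, ← f_sub, ← f_sub]; congr 2; noncomm_ring
      _ = 1 := by rw [← hx, Units.mul_inv, sub_self, f_zero, add_zero]
  · calc (1 - f ↑x⁻¹) * (1 + f 1) = 1 + (f 1 - f ↑x⁻¹ - f ↑x⁻¹ * f 1) := by
          noncomm_ring
      _ = 1 + f (1 - ↑x⁻¹ * (1 + r ⬝ᵥ c)) := by
        rw [f_mul, ← f_sub, ← f_sub]; congr 2; noncomm_ring
      _ = 1 := by rw [← hx, Units.inv_mul, sub_self, f_zero, add_zero]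

theorem exists_unit_mulVec_single_eq (i : m) {v w : m → R} (hv : IsUnit (v i)) (hw : w i = 1)
    (hwv : w ⬝ᵥ v = 1) :
    ∃ g : (Matrix m m R)ˣ, ↑g *ᵥ Pi.single i 1 = v ∧ w ᵥ* ↑g = Pi.single i 1 := by
  -- `g = A * B`: `A` replaces column `i` of `1` by `v` (it fixes `w`, as `w ⬝ᵥ v = w i`),
  -- and `B` is a row operation on row `i` sending `w` to the `i`-th coordinate vector.
  have hA : IsUnit (1 + vecMulVec (v - Pi.single i 1) (Pi.single i 1)) :=
    isUnit_one_add_vecMulVec (by simpa using hv)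
  have hB : IsUnit (1 + vecMulVec (Pi.single i 1) (Pi.single i 1 - w)) :=
    isUnit_one_add_vecMulVec (by simp [hw])
  refine ⟨hA.unit * hB.unit, ?_, ?_⟩ <;> simp only [Units.val_mul, IsUnit.unit_spec]
  · rw [← mulVec_mulVec, add_mulVec, add_mulVec, one_mulVec, one_mulVec, vecMulVec_mulVec,
      vecMulVec_mulVec]
    simp [hw]
  · rw [← vecMul_vecMul, vecMul_add, vecMul_add, vecMul_one, vecMul_one, vecMul_vecMulVec,
      vecMul_vecMulVec]
    simp [hw, hwv, dotProduct_sub]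

theorem exists_unit_conj_mulVec_single (i : m) {e : Matrix m m R} (he : IsIdempotentElem e)
    (hu : IsUnit (e i i)) :
    ∃ g : (Matrix m m R)ˣ, (g⁻¹ * e * g : Matrix m m R) *ᵥ Pi.single i 1 = Pi.single i 1 ∧
      Pi.single i 1 ᵥ* (g⁻¹ * e * g : Matrix m m R) = Pi.single i 1 := by
  set v := e *ᵥ Pi.single i 1
  set w := (↑hu.unit⁻¹ : R) • (Pi.single i 1 ᵥ* e) with hw_def
  have hev : e *ᵥ v = v := by rw [mulVec_mulVec, he.eq]
  have hwe : w ᵥ* e = w := by rw [hw_def, smul_vecMul, vecMul_vecMul, he.eq]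
  have hw : w i = 1 := by simp [w]
  have hwv : w ⬝ᵥ v = 1 := by
    rw [dotProduct_mulVec, hwe, hw_def, smul_dotProduct]; simp
  obtain ⟨g, hg, hg'⟩ := exists_unit_mulVec_single_eq i (by simpa [v] using hu) hw hwv
  have hg_inv : (↑g⁻¹ : Matrix m m R) *ᵥ v = Pi.single i 1 := by
    rw [← hg, mulVec_mulVec, Units.inv_mul, one_mulVec]
  have hg'_inv : Pi.single i 1 ᵥ* (↑g⁻¹ : Matrix m m R) = w := by
    rw [← hg', vecMul_vecMul, Units.mul_inv, vecMul_one]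
  refine ⟨g, ?_, ?_⟩
  · rw [← mulVec_mulVec, ← mulVec_mulVec, hg, hev, hg_inv]
  · rw [← vecMul_vecMul, ← vecMul_vecMul, hg'_inv, hwe, hg']

end Transvection

section BlockCons

variable {R : Type*} [Ring R] {n : ℕ}

/-- The block diagonal matrix `[[a, 0], [0, X]]`. -/
def blockCons (a : R) (X : Matrix (Fin n) (Fin n) R) : Matrix (Fin (n + 1)) (Fin (n + 1)) R :=
  of (Fin.cons (Fin.cons a 0) fun i => Fin.cons 0 (X i))

variable (a : R) (X : Matrix (Fin n) (Fin n) R)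

@[simp] theorem blockCons_zero_zero : blockCons a X 0 0 = a := rfl

@[simp] theorem blockCons_zero_succ (j : Fin n) : blockCons a X 0 j.succ = 0 := rfl

@[simp] theorem blockCons_succ_zero (i : Fin n) : blockCons a X i.succ 0 = 0 := rfl

@[simp] theorem blockCons_succ_succ (i j : Fin n) : blockCons a X i.succ j.succ = X i j := rfl

@[simp] theorem submatrix_succ_blockCons : (blockCons a X).submatrix Fin.succ Fin.succ = X := rfl

theorem blockCons_mul (b : R) (Y : Matrix (Fin n) (Fin n) R) :
    blockCons a X * blockCons b Y = blockCons (a * b) (X * Y) := by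
  ext i j
  cases i using Fin.cases <;> cases j using Fin.cases <;> simp [mul_apply, Fin.sum_univ_succ]

@[simp] theorem blockCons_one : blockCons 1 (1 : Matrix (Fin n) (Fin n) R) = 1 := by
  ext i j
  cases i using Fin.cases <;> cases j using Fin.cases <;>
    simp [one_apply, Fin.succ_ne_zero, (Fin.succ_ne_zero _).symm]

theorem blockCons_diagonal (d : Fin (n + 1) → R) :
    blockCons (d 0) (diagonal fun i => d i.succ) = diagonal d := by
  ext i j
  cases i using Fin.cases <;> cases j using Fin.cases <;>
    simp [diagonal_apply, Fin.succ_ne_zero, (Fin.succ_ne_zero _).symm]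

theorem eq_blockCons_of_mulVec_single {Y : Matrix (Fin (n + 1)) (Fin (n + 1)) R}
    (hcol : Y *ᵥ Pi.single 0 1 = Pi.single 0 a) (hrow : Pi.single 0 1 ᵥ* Y = Pi.single 0 a) :
    Y = blockCons a (Y.submatrix Fin.succ Fin.succ) := by
  ext i j
  cases i using Fin.cases <;> cases j using Fin.cases
  · simpa using congrFun hcol 0
  · simpa using (congrFun hrow _).trans (Pi.single_eq_of_ne (Fin.succ_ne_zero _) _)
  · simpa using (congrFun hcol _).trans (Pi.single_eq_of_ne (Fin.succ_ne_zero _) _)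
  · simp

theorem IsTwoSidedEigen.eq_blockCons {Y e : Matrix (Fin (n + 1)) (Fin (n + 1)) R} {ε : ℤˣ}
    (h : IsTwoSidedEigen Y ε e) (hcol : e *ᵥ Pi.single 0 1 = Pi.single 0 1)
    (hrow : Pi.single 0 1 ᵥ* e = Pi.single 0 1) :
    Y = blockCons ((ε : ℤ) : R) (Y.submatrix Fin.succ Fin.succ) := by
  have hε : ε • (Pi.single 0 1 : Fin (n + 1) → R) = Pi.single 0 ((ε : ℤ) : R) := by
    rw [← Pi.single_smul', Units.smul_def, zsmul_one]
  apply eq_blockCons_of_mulVec_single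
  · rw [← hcol, mulVec_mulVec, h.1, smul_mulVec, hcol, hε]
  · rw [← hrow, vecMul_vecMul, h.2, vecMul_smul, hrow, hε]

theorem mul_eq_submatrix_succ_conj {g : (Matrix (Fin (n + 1)) (Fin (n + 1)) R)ˣ}
    {X Y : Matrix (Fin (n + 1)) (Fin (n + 1)) R} {a b : R} {X₀ Y₀ : Matrix (Fin n) (Fin n) R}
    (hX : (g⁻¹ * X * g : Matrix (Fin (n + 1)) (Fin (n + 1)) R) = blockCons a X₀)
    (hY : (g⁻¹ * Y * g : Matrix (Fin (n + 1)) (Fin (n + 1)) R) = blockCons b Y₀) :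
    X₀ * Y₀ = (g⁻¹ * (X * Y) * g : Matrix (Fin (n + 1)) (Fin (n + 1)) R).submatrix
      Fin.succ Fin.succ := by
  rw [← Units.conj_mul_conj, hX, hY, blockCons_mul, submatrix_succ_blockCons]

def blockConsOneHom : Matrix (Fin n) (Fin n) R →* Matrix (Fin (n + 1)) (Fin (n + 1)) R where
  toFun := blockCons 1
  map_one' := blockCons_one
  map_mul' X Y := by rw [blockCons_mul, one_mul]

theorem conj_map_blockConsOneHom_mul_inv {g : (Matrix (Fin (n + 1)) (Fin (n + 1)) R)ˣ}
    {X : Matrix (Fin (n + 1)) (Fin (n + 1)) R} {a : R} {X₀ : Matrix (Fin n) (Fin n) R}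
    (hX : (g⁻¹ * X * g : Matrix (Fin (n + 1)) (Fin (n + 1)) R) = blockCons a X₀)
    (h : (Matrix (Fin n) (Fin n) R)ˣ) :
    (Units.val (Units.map blockConsOneHom h * g⁻¹) * X *
        Units.val (Units.map blockConsOneHom h * g⁻¹)⁻¹ :
        Matrix (Fin (n + 1)) (Fin (n + 1)) R) =
      blockCons a (h * X₀ * h⁻¹ : Matrix (Fin n) (Fin n) R) :=
  calc _ = blockCons 1 h * (g⁻¹ * X * g : Matrix (Fin (n + 1)) (Fin (n + 1)) R) *
          blockCons 1 ↑h⁻¹ := by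
        simp only [Units.val_mul, mul_assoc]
        rfl
    _ = blockCons a (h * X₀ * h⁻¹ : Matrix (Fin n) (Fin n) R) := by
        rw [hX, blockCons_mul, blockCons_mul, one_mul, mul_one]

end BlockCons

end Matrix

section LocalRing

variable {R : Type*} [Ring R] [IsLocalRing R]

theorem exists_isUnit_eigenProj_mul_eigenProj_apply {m : Type*} [Fintype m] [DecidableEq m]
    [Invertible (2 : Matrix m m R)] (S T : Matrix m m R) (i : m) :
    ∃ ε δ : ℤˣ, IsUnit ((eigenProj (ε • S) * eigenProj (δ • T)) i i) := by
  obtain ⟨⟨ε, δ⟩, -, hu⟩ := IsLocalRing.exists_of_isUnit_sum (s := Finset.univ)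
    (f := fun p : ℤˣ × ℤˣ => (eigenProj (p.1 • S) * eigenProj (p.2 • T)) i i)
    (by rw [← Matrix.sum_apply, sum_eigenProj_mul_eigenProj, one_apply_eq]
        exact isUnit_one)
  exact ⟨ε, δ, hu⟩

theorem exists_unit_conj_eq_blockCons {n : ℕ}
    [Invertible (2 : Matrix (Fin (n + 1)) (Fin (n + 1)) R)]
    {S T : Matrix (Fin (n + 1)) (Fin (n + 1)) R} (hS : S * S = 1) (hT : T * T = 1)
    (hST : Commute S T) :
    ∃ (g : (Matrix (Fin (n + 1)) (Fin (n + 1)) R)ˣ) (ε δ : ℤˣ)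
      (S₀ T₀ : Matrix (Fin n) (Fin n) R),
      (g⁻¹ * S * g : Matrix (Fin (n + 1)) (Fin (n + 1)) R) = blockCons ((ε : ℤ) : R) S₀ ∧
        (g⁻¹ * T * g : Matrix (Fin (n + 1)) (Fin (n + 1)) R) =
          blockCons ((δ : ℤ) : R) T₀ := by
  obtain ⟨ε, δ, hu⟩ := exists_isUnit_eigenProj_mul_eigenProj_apply S T 0
  obtain ⟨g, hcol, hrow⟩ := exists_unit_conj_mulVec_single 0
    (isIdempotentElem_eigenProj_mul_eigenProj hS hT hST ε δ) hu
  obtain ⟨hSe, hTe⟩ := isTwoSidedEigen_eigenProj_mul_eigenProj hS hT hST ε δ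
  exact ⟨g, ε, δ, _, _, (hSe.units_conj g).eq_blockCons hcol hrow,
    (hTe.units_conj g).eq_blockCons hcol hrow⟩

theorem exists_unit_conj_eq_diagonal (h2 : IsUnit (2 : R)) (n : ℕ)
    {S T : Matrix (Fin n) (Fin n) R} (hS : S * S = 1) (hT : T * T = 1) (hST : Commute S T) :
    ∃ (g : (Matrix (Fin n) (Fin n) R)ˣ) (ε δ : Fin n → ℤˣ),
      (g * S * g⁻¹ : Matrix (Fin n) (Fin n) R) = diagonal (fun i => ((ε i : ℤ) : R)) ∧
        (g * T * g⁻¹ : Matrix (Fin n) (Fin n) R) = diagonal (fun i => ((δ i : ℤ) : R)) := by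
  induction n with
  | zero => exact ⟨1, finZeroElim, finZeroElim, Subsingleton.elim _ _, Subsingleton.elim _ _⟩
  | succ n ih =>
    have h2' : IsUnit (2 : Matrix (Fin (n + 1)) (Fin (n + 1)) R) := by
      rw [← map_ofNat (scalar (Fin (n + 1))) 2]; exact h2.map _
    let := h2'.invertible
    obtain ⟨g, ε, δ, S₀, T₀, hS', hT'⟩ := exists_unit_conj_eq_blockCons hS hT hST
    have hS₀ : S₀ * S₀ = 1 := by
      rw [mul_eq_submatrix_succ_conj hS' hS', hS, mul_one, Units.inv_mul,
        submatrix_one _ (Fin.succ_injective _)]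
    have hT₀ : T₀ * T₀ = 1 := by
      rw [mul_eq_submatrix_succ_conj hT' hT', hT, mul_one, Units.inv_mul,
        submatrix_one _ (Fin.succ_injective _)]
    have hST₀ : Commute S₀ T₀ := by
      rw [Commute, SemiconjBy, mul_eq_submatrix_succ_conj hS' hT',
        mul_eq_submatrix_succ_conj hT' hS', hST.eq]
    obtain ⟨h, ε₀, δ₀, hS₀', hT₀'⟩ := ih hS₀ hT₀ hST₀
    refine ⟨Units.map blockConsOneHom h * g⁻¹, Fin.cons ε ε₀, Fin.cons δ δ₀, ?_, ?_⟩
    · rw [conj_map_blockConsOneHom_mul_inv hS', hS₀', ← blockCons_diagonal]; rfl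
    · rw [conj_map_blockConsOneHom_mul_inv hT', hT₀', ← blockCons_diagonal]; rfl

end LocalRing

theorem stmt_5_general (R : Type*) [Ring R] [IsLocalRing R] (h2 : IsUnit (2 : R))
    (n : ℕ) (I₁ I₂ : (Matrix (Fin n) (Fin n) R)ˣ)
    (h₁ : I₁ ^ 2 = 1) (h₂ : I₂ ^ 2 = 1) (hc : I₁ * I₂ = I₂ * I₁) :
    ∃ g : (Matrix (Fin n) (Fin n) R)ˣ, ∃ d₁ d₂ : Fin n → R,
      (∀ i, d₁ i = 1 ∨ d₁ i = -1) ∧ (∀ i, d₂ i = 1 ∨ d₂ i = -1) ∧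
      Units.val (g * I₁ * g⁻¹) = Matrix.diagonal d₁ ∧
      Units.val (g * I₂ * g⁻¹) = Matrix.diagonal d₂ := by
  have hS : (I₁ * I₁ : Matrix (Fin n) (Fin n) R) = 1 := by
    rw [← Units.val_mul, ← sq, h₁, Units.val_one]
  have hT : (I₂ * I₂ : Matrix (Fin n) (Fin n) R) = 1 := by
    rw [← Units.val_mul, ← sq, h₂, Units.val_one]
  have hST : Commute (I₁ : Matrix (Fin n) (Fin n) R) I₂ := Units.ext_iff.mp hc
  obtain ⟨g, ε, δ, hS', hT'⟩ := exists_unit_conj_eq_diagonal h2 n hS hT hST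
  have sign (u : ℤˣ) : ((u : ℤ) : R) = 1 ∨ ((u : ℤ) : R) = -1 := by
    rcases Int.units_eq_one_or u with rfl | rfl <;> simp
  exact ⟨g, _, _, fun i => sign (ε i), fun i => sign (δ i), by simpa using hS',
    by simpa using hT'⟩

theorem stmt_5 (R : Type*) [Ring R] [Nontrivial R] [IsLocalRing R] (h2 : IsUnit (2 : R))
    (n : ℕ) (I₁ I₂ : (Matrix (Fin n) (Fin n) R)ˣ)
    (h₁ : I₁ ^ 2 = 1) (h₂ : I₂ ^ 2 = 1) (hc : I₁ * I₂ = I₂ * I₁) :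
    ∃ g : (Matrix (Fin n) (Fin n) R)ˣ, ∃ d₁ d₂ : Fin n → R,
      (∀ i, d₁ i = 1 ∨ d₁ i = -1) ∧ (∀ i, d₂ i = 1 ∨ d₂ i = -1) ∧
      Units.val (g * I₁ * g⁻¹) = Matrix.diagonal d₁ ∧
      Units.val (g * I₂ * g⁻¹) = Matrix.diagonal d₂ :=
  stmt_5_general R h2 n I₁ I₂ h₁ h₂ hc
end
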